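/- arXiv:2603.16094 — 2 statements merged into one kernel-verified Lean document; each statement's English description precedes it below -/
import Mathlib

section
/- Let T > 0, let X ⊂ ℝ^n and U ⊂ ℝ^m be compact sets, set Σ := [0,T] × X × U, let f : ℝ^n × ℝ^m → ℝ^n be continuous, and let ρ₀ be a Borel probability measure on X. Define Δ to be the set of pairs (μ,ν), where μ is a finite Borel measure on Σ with total mass μ(Σ) = T and ν is a Borel probability measure on X, such that for every continuously differentiable v : ℝ × ℝ^n → ℝ one has ∫_X v(T,x) dν(x) − ∫_X v(0,x) dρ₀(x) = ∫_Σ ( ∂_t v(t,x) + ∇_x v(t,x) · f(x,u) ) dμ(t,x,u). Then (a) Δ is convex: if (μ₁,ν₁), (μ₂,ν₂) ∈ Δ and α ∈ [0,1], then (α μ₁ + (1−α) μ₂, α ν₁ + (1−α) ν₂) ∈ Δ; and (b) Δ is compact in the product of the topologies of weak convergence of finite measures on Σ and of probability measures on X. -/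
/-!
Both parts come from one observation: on a compact space every continuous function is bounded, so
`μ ↦ ∫ g dμ` is affine in `μ` and continuous for the weak topology. Hence every Liouville
constraint, indexed by a `C¹` test function `v`, cuts out a convex closed set of pairs `(μ, ν)`,
as do the two mass conditions. By Prokhorov's theorem (Riesz–Markov–Kakutani on a compact
space), finite measures of fixed mass on the compact spaces `[0,T] × X × U` and `X` form compact
sets, and `Δ` is a closed subset of their product.
-/

open MeasureTheory BoundedContinuousFunction Set
open scoped ENNReal NNReal

section

variable {Ω : Type*} [MeasurableSpace Ω]

lemma FiniteMeasure.toMeasure_smul_add_smul_apply (a b : ℝ≥0) (μ ν : FiniteMeasure Ω)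
    (s : Set Ω) :
    ((a • μ + b • ν : FiniteMeasure Ω) : Measure Ω) s
      = a * (μ : Measure Ω) s + b * (ν : Measure Ω) s := by
  simp only [FiniteMeasure.toMeasure_add, FiniteMeasure.toMeasure_smul, Measure.add_apply,
    Measure.smul_apply, ENNReal.smul_def, smul_eq_mul]

variable [TopologicalSpace Ω] [CompactSpace Ω] [OpensMeasurableSpace Ω]

lemma FiniteMeasure.continuous_integral_of_continuous {g : Ω → ℝ} (hg : Continuous g) :
    Continuous fun μ : FiniteMeasure Ω => ∫ x, g x ∂(μ : Measure Ω) :=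
  FiniteMeasure.continuous_integral_boundedContinuousFunction (mkOfCompact ⟨g, hg⟩)

lemma FiniteMeasure.integral_smul_add_smul {g : Ω → ℝ} (hg : Continuous g) (a b : ℝ≥0)
    (μ ν : FiniteMeasure Ω) :
    ∫ x, g x ∂((a • μ + b • ν : FiniteMeasure Ω) : Measure Ω)
      = a * ∫ x, g x ∂(μ : Measure Ω) + b * ∫ x, g x ∂(ν : Measure Ω) := by
  have hint (ρ : FiniteMeasure Ω) : Integrable g ρ := (mkOfCompact ⟨g, hg⟩).integrable _
  rw [FiniteMeasure.toMeasure_add, integral_add_measure (hint _) (hint _),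
    FiniteMeasure.toMeasure_smul, FiniteMeasure.toMeasure_smul,
    integral_smul_nnreal_measure, integral_smul_nnreal_measure, NNReal.smul_def, NNReal.smul_def,
    smul_eq_mul, smul_eq_mul]

end

section ConstrainedMeasurePairs

variable {Ω₁ Ω₂ ι : Type*} [MeasurableSpace Ω₁] [MeasurableSpace Ω₂]

/-- With `P = ContDiff ℝ 1` on test functions `v`, this is the feasible set `Δ`. -/
def constrainedMeasurePairs (a b : ℝ≥0) (P : ι → Prop) (φ : ι → Ω₂ → ℝ) (c : ι → ℝ)
    (ψ : ι → Ω₁ → ℝ) : Set (FiniteMeasure Ω₁ × FiniteMeasure Ω₂) :=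
  {p | (p.1 : Measure Ω₁) univ = a ∧ (p.2 : Measure Ω₂) univ = b ∧
    ∀ i, P i → ∫ y, φ i y ∂(p.2 : Measure Ω₂) - c i = ∫ x, ψ i x ∂(p.1 : Measure Ω₁)}

variable [TopologicalSpace Ω₁] [CompactSpace Ω₁] [TopologicalSpace Ω₂] [CompactSpace Ω₂]
  {a b : ℝ≥0} {P : ι → Prop} {φ : ι → Ω₂ → ℝ} {c : ι → ℝ} {ψ : ι → Ω₁ → ℝ}

lemma smul_add_smul_mem_constrainedMeasurePairs [OpensMeasurableSpace Ω₁]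
    [OpensMeasurableSpace Ω₂] (hφ : ∀ i, P i → Continuous (φ i)) (hψ : ∀ i, P i → Continuous (ψ i))
    {p q : FiniteMeasure Ω₁ × FiniteMeasure Ω₂}
    (hp : p ∈ constrainedMeasurePairs a b P φ c ψ) (hq : q ∈ constrainedMeasurePairs a b P φ c ψ)
    {s t : ℝ≥0} (hst : s + t = 1) :
    (s • p.1 + t • q.1, s • p.2 + t • q.2) ∈ constrainedMeasurePairs a b P φ c ψ := by
  obtain ⟨hp₁, hp₂, hp⟩ := hp
  obtain ⟨hq₁, hq₂, hq⟩ := hq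
  have hst_ennreal : (s : ℝ≥0∞) + t = 1 := by exact_mod_cast hst
  refine ⟨?_, ?_, fun i hi => ?_⟩
  · rw [FiniteMeasure.toMeasure_smul_add_smul_apply, hp₁, hq₁, ← add_mul, hst_ennreal, one_mul]
  · rw [FiniteMeasure.toMeasure_smul_add_smul_apply, hp₂, hq₂, ← add_mul, hst_ennreal, one_mul]
  · have hst_real : (s : ℝ) + t = 1 := by exact_mod_cast hst
    rw [FiniteMeasure.integral_smul_add_smul (hφ i hi),
      FiniteMeasure.integral_smul_add_smul (hψ i hi), ← hp i hi, ← hq i hi]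
    linear_combination c i * hst_real

lemma isClosed_constrainedMeasurePairs [OpensMeasurableSpace Ω₁] [OpensMeasurableSpace Ω₂]
    (hφ : ∀ i, P i → Continuous (φ i)) (hψ : ∀ i, P i → Continuous (ψ i)) :
    IsClosed (constrainedMeasurePairs a b P φ c ψ) := by
  simp only [constrainedMeasurePairs, ← FiniteMeasure.ennreal_mass, ENNReal.coe_inj,
    ofPred_and, ofPred_forall]
  refine .inter (isClosed_eq (by fun_prop) (by fun_prop)) <|
    .inter (isClosed_eq (by fun_prop) (by fun_prop)) <|
    isClosed_iInter fun i => isClosed_iInter fun hi => isClosed_eq ?_ ?_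
  · exact ((FiniteMeasure.continuous_integral_of_continuous (hφ i hi)).comp continuous_snd).sub
      continuous_const
  · exact (FiniteMeasure.continuous_integral_of_continuous (hψ i hi)).comp continuous_fst

lemma isCompact_constrainedMeasurePairs [T2Space Ω₁] [BorelSpace Ω₁] [T2Space Ω₂] [BorelSpace Ω₂]
    (hφ : ∀ i, P i → Continuous (φ i)) (hψ : ∀ i, P i → Continuous (ψ i)) :
    IsCompact (constrainedMeasurePairs a b P φ c ψ) := by
  refine ((isCompact_setOfPred_finiteMeasure_eq_of_compactSpace Ω₁ a).prod
    (isCompact_setOfPred_finiteMeasure_eq_of_compactSpace Ω₂ b)).of_isClosed_subset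
    (isClosed_constrainedMeasurePairs hφ hψ) ?_
  rintro p ⟨hp₁, hp₂, -⟩
  simp only [← FiniteMeasure.ennreal_mass, ENNReal.coe_inj] at hp₁ hp₂
  exact ⟨hp₁, hp₂⟩

end ConstrainedMeasurePairs

theorem feasible_set_convex_and_compact_general
    (n m : ℕ) (T : ℝ)
    (X : Set (EuclideanSpace ℝ (Fin n))) (hX : IsCompact X)
    (U : Set (EuclideanSpace ℝ (Fin m))) (hU : IsCompact U)
    (f : EuclideanSpace ℝ (Fin n) × EuclideanSpace ℝ (Fin m) → EuclideanSpace ℝ (Fin n))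
    (hf : Continuous f)
    (ρ0 : Measure X)
    (Δ : Set (FiniteMeasure (↥(Set.Icc (0:ℝ) T) × ↥X × ↥U) × FiniteMeasure ↥X))
    (hΔ : Δ = {p | (p.1 : Measure (↥(Set.Icc (0:ℝ) T) × ↥X × ↥U)) Set.univ = ENNReal.ofReal T
        ∧ (p.2 : Measure ↥X) Set.univ = 1
        ∧ ∀ v : ℝ × EuclideanSpace ℝ (Fin n) → ℝ, ContDiff ℝ 1 v →
          (∫ y, v (T, (y : EuclideanSpace ℝ (Fin n))) ∂(p.2 : Measure ↥X))
              - (∫ y, v (0, (y : EuclideanSpace ℝ (Fin n))) ∂ρ0)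
            = ∫ q, (fderiv ℝ v ((q.1 : ℝ), (q.2.1 : EuclideanSpace ℝ (Fin n))) (1, 0)
                + fderiv ℝ v ((q.1 : ℝ), (q.2.1 : EuclideanSpace ℝ (Fin n)))
                    (0, f ((q.2.1 : EuclideanSpace ℝ (Fin n)),
                           (q.2.2 : EuclideanSpace ℝ (Fin m)))))
              ∂(p.1 : Measure (↥(Set.Icc (0:ℝ) T) × ↥X × ↥U))}) :
    -- (a) convexity of Δ
    (∀ p ∈ Δ, ∀ q ∈ Δ, ∀ α : ℝ, 0 ≤ α → α ≤ 1 →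
      (α.toNNReal • p.1 + (1 - α).toNNReal • q.1,
       α.toNNReal • p.2 + (1 - α).toNNReal • q.2) ∈ Δ)
    ∧
    -- (b) compactness of Δ in the product of the topologies of weak convergence
    @IsCompact _ (@instTopologicalSpaceProd _ _ inferInstance inferInstance) Δ := by
  have : CompactSpace X := isCompact_iff_compactSpace.mp hX
  have : CompactSpace U := isCompact_iff_compactSpace.mp hU
  have hφ (v : ℝ × EuclideanSpace ℝ (Fin n) → ℝ) (hv : ContDiff ℝ 1 v) :
      Continuous fun y : X => v (T, y) := by fun_prop
  have hψ (v : ℝ × EuclideanSpace ℝ (Fin n) → ℝ) (hv : ContDiff ℝ 1 v) :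
      Continuous fun q : Icc (0:ℝ) T × X × U =>
        fderiv ℝ v (q.1, q.2.1) (1, 0) + fderiv ℝ v (q.1, q.2.1) (0, f (q.2.1, q.2.2)) := by
    have := hv.continuous_fderiv one_ne_zero
    fun_prop
  subst hΔ
  refine ⟨fun p hp q hq α hα₀ hα₁ => ?_, isCompact_constrainedMeasurePairs hφ hψ⟩
  refine smul_add_smul_mem_constrainedMeasurePairs hφ hψ hp hq ?_
  rw [← Real.toNNReal_add hα₀ (by linarith), add_sub_cancel, Real.toNNReal_one]

/-- **Convexity and weak compactness of the feasible set `Δ` of the OM-MFC problem.**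
`Δ` consists of pairs `(μ, ν)` of a finite Borel measure `μ` on
`Σ = [0,T] × X × U` with total mass `T` and a Borel probability measure `ν` on `X`
(encoded as a finite measure of total mass `1`) satisfying the weak Liouville constraint.
Here `∂_t v (t,x) = fderiv ℝ v (t,x) (1,0)` and `∇_x v (t,x) ⬝ w = fderiv ℝ v (t,x) (0,w)`,
and the space of finite measures carries the topology of weak convergence. -/
theorem feasible_set_convex_and_compact
    (n m : ℕ) (T : ℝ) (hT : 0 < T)
    (X : Set (EuclideanSpace ℝ (Fin n))) (hX : IsCompact X)
    (U : Set (EuclideanSpace ℝ (Fin m))) (hU : IsCompact U)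
    (f : EuclideanSpace ℝ (Fin n) × EuclideanSpace ℝ (Fin m) → EuclideanSpace ℝ (Fin n))
    (hf : Continuous f)
    (ρ0 : Measure X) (hρ0 : IsProbabilityMeasure ρ0)
    (Δ : Set (FiniteMeasure (↥(Set.Icc (0:ℝ) T) × ↥X × ↥U) × FiniteMeasure ↥X))
    (hΔ : Δ = {p | (p.1 : Measure (↥(Set.Icc (0:ℝ) T) × ↥X × ↥U)) Set.univ = ENNReal.ofReal T
        ∧ (p.2 : Measure ↥X) Set.univ = 1
        ∧ ∀ v : ℝ × EuclideanSpace ℝ (Fin n) → ℝ, ContDiff ℝ 1 v →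
          (∫ y, v (T, (y : EuclideanSpace ℝ (Fin n))) ∂(p.2 : Measure ↥X))
              - (∫ y, v (0, (y : EuclideanSpace ℝ (Fin n))) ∂ρ0)
            = ∫ q, (fderiv ℝ v ((q.1 : ℝ), (q.2.1 : EuclideanSpace ℝ (Fin n))) (1, 0)
                + fderiv ℝ v ((q.1 : ℝ), (q.2.1 : EuclideanSpace ℝ (Fin n)))
                    (0, f ((q.2.1 : EuclideanSpace ℝ (Fin n)),
                           (q.2.2 : EuclideanSpace ℝ (Fin m)))))
              ∂(p.1 : Measure (↥(Set.Icc (0:ℝ) T) × ↥X × ↥U))}) :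
    -- (a) convexity of Δ
    (∀ p ∈ Δ, ∀ q ∈ Δ, ∀ α : ℝ, 0 ≤ α → α ≤ 1 →
      (α.toNNReal • p.1 + (1 - α).toNNReal • q.1,
       α.toNNReal • p.2 + (1 - α).toNNReal • q.2) ∈ Δ)
    ∧
    -- (b) compactness of Δ in the product of the topologies of weak convergence
    @IsCompact _ (@instTopologicalSpaceProd _ _ inferInstance inferInstance) Δ :=
  feasible_set_convex_and_compact_general n m T X hX U hU f hf ρ0 Δ hΔ
end

section
/- Let T > 0, let Y be a compact metric space, and let μ be a finite Borel measure on [0,T] × Y. Suppose that for every continuously differentiable function ψ : ℝ → ℝ one has ∫_{[0,T]×Y} ψ'(t) dμ(t,y) = ψ(T) − ψ(0). Then the pushforward of μ under the projection (t,y) ↦ t equals Lebesgue measure restricted to [0,T]. -/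
open MeasureTheory

lemma key_integral_eq
    (T : ℝ)
    {Y : Type*} [MetricSpace Y] [CompactSpace Y] [MeasurableSpace Y] [BorelSpace Y]
    (μ : Measure (↥(Set.Icc (0:ℝ) T) × Y)) (hμ : IsFiniteMeasure μ)
    (hLiouville : ∀ ψ : ℝ → ℝ, ContDiff ℝ 1 ψ →
      ∫ p, deriv ψ ((p.1 : ℝ)) ∂μ = ψ T - ψ 0)
    (g : ℝ → ℝ) (hg : Continuous g) :
    ∫ p : ↥(Set.Icc (0:ℝ) T) × Y, g ((p.1 : ℝ)) ∂μ = ∫ t in (0:ℝ)..T, g t := by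
  set ψ : ℝ → ℝ := fun s => ∫ t in (0:ℝ)..s, g t with hψ
  have hderiv : ∀ s, HasDerivAt ψ (g s) s := fun s =>
    intervalIntegral.integral_hasDerivAt_right (hg.intervalIntegrable _ _)
      hg.aestronglyMeasurable.stronglyMeasurableAtFilter hg.continuousAt
  have hd : deriv ψ = g := funext fun s => (hderiv s).deriv
  have hC : ContDiff ℝ 1 ψ := by
    rw [contDiff_one_iff_deriv, hd]
    exact ⟨fun s => (hderiv s).differentiableAt, hg⟩
  have := hLiouville ψ hC
  rw [hd] at this
  simpa [ψ, intervalIntegral.integral_same] using this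

/-- **Identification of the time marginal of a feasible occupation measure.**
If a finite Borel measure `μ` on `[0,T] × Y` satisfies
`∫ ψ'(t) dμ(t,y) = ψ(T) − ψ(0)` for every `C¹` function `ψ : ℝ → ℝ`, then the
pushforward of `μ` under the time projection equals Lebesgue measure on `[0,T]`. -/
theorem time_marginal_is_lebesgue
    (T : ℝ) (hT : 0 < T)
    {Y : Type*} [MetricSpace Y] [CompactSpace Y] [MeasurableSpace Y] [BorelSpace Y]
    (μ : Measure (↥(Set.Icc (0:ℝ) T) × Y)) (hμ : IsFiniteMeasure μ)
    (hLiouville : ∀ ψ : ℝ → ℝ, ContDiff ℝ 1 ψ →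
      ∫ p, deriv ψ ((p.1 : ℝ)) ∂μ = ψ T - ψ 0) :
    Measure.map (fun p : ↥(Set.Icc (0:ℝ) T) × Y => (p.1 : ℝ)) μ
      = volume.restrict (Set.Icc (0:ℝ) T) := by
  have hproj : Measurable (fun p : ↥(Set.Icc (0:ℝ) T) × Y => (p.1 : ℝ)) :=
    measurable_subtype_coe.comp measurable_fst
  set ν := Measure.map (fun p : ↥(Set.Icc (0:ℝ) T) × Y => (p.1 : ℝ)) μ with hν
  have hνfin : IsFiniteMeasure ν := Measure.isFiniteMeasure_map μ _
  set lam := volume.restrict (Set.Icc (0:ℝ) T) with hlam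
  have hlamfin : IsFiniteMeasure lam := by
    constructor
    rw [hlam, Measure.restrict_apply_univ, Real.volume_Icc]
    exact ENNReal.ofReal_lt_top
  -- integrals of continuous functions against ν equal interval integrals
  have hint : ∀ f : ℝ → ℝ, Continuous f → ∫ x, f x ∂ν = ∫ x, f x ∂lam := by
    intro f hf
    have h1 : ∫ x, f x ∂ν = ∫ p : ↥(Set.Icc (0:ℝ) T) × Y, f ((p.1 : ℝ)) ∂μ :=
      integral_map hproj.aemeasurable hf.aestronglyMeasurable
    have h2 := key_integral_eq T μ hμ hLiouville f hf
    rw [h1, h2, intervalIntegral.integral_of_le hT.le, hlam,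
      ← restrict_Ioc_eq_restrict_Icc]
  refine ext_of_forall_lintegral_eq_of_IsFiniteMeasure (fun f => ?_)
  rw [lintegral_coe_eq_integral f (BoundedContinuousFunction.integrable_of_nnreal ν f),
    lintegral_coe_eq_integral f (BoundedContinuousFunction.integrable_of_nnreal lam f)]
  congr 1
  exact hint _ (NNReal.continuous_coe.comp f.continuous)
end
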